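/- Let D_{k+1} = W_{k+1} − W_k be the martingale differences of the directed polymer partition function. Then the conditional variance given G_k satisfies E[D_{k+1}² | G_k] = κ₂ · P^{⊗2}[ e^{h_k(S)} e^{h_k(S̃)} 1{S_k = S̃_k} ], where κ₂ = e^{λ₂} − 1 and h_k(S) = Σ_{i=0}^{k-1} (β η(i, S_i) − λ(β)). -/

import Mathlib

open MeasureTheory ProbabilityTheory Filter
open scoped ENNReal NNReal

/-!
Under `P` the prefix `γ 0, …, γ k` of the walk takes finitely many values, so `W k`, `W (k + 1)`
and the right-hand side are finite sums over prefixes `v`, and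
`D_{k+1} = ∑_v P(v) e^{h_k(v)} ξ_k(v_k)` with `ξ_k(x) = e^{β η(k, x) - λ(β)} - 1`.
In each term of `D_{k+1}²` the factor `e^{h_k(v) + h_k(u)}` is `𝒢_k`-measurable while
`ξ_k(v_k) ξ_k(u_k)` is independent of `𝒢_k`; hence its conditional expectation is its mean,
`κ₂` if `v_k = u_k` and `0` otherwise. All the products involved are integrable because
`e^{h_k(v)}` and `ξ_k(x)` lie in `L²`.
-/

noncomputable section

/-- `S` is a nearest-neighbor symmetric simple random walk on `ℤ^d` started at `x0`,
under the probability measure `μ`: it has independent increments, each increment being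
uniformly distributed on the `2d` unit vectors. -/
def IsSRWFrom (d : ℕ) {Ω : Type} [MeasurableSpace Ω] (μ : Measure Ω)
    (S : ℕ → Ω → (Fin d → ℤ)) (x0 : Fin d → ℤ) : Prop :=
  (∀ n, Measurable (S n)) ∧ (∀ᵐ ω ∂μ, S 0 ω = x0) ∧
  iIndepFun (fun n ω => S (n + 1) ω - S n ω) μ ∧
  ∀ n x, μ {ω | S (n + 1) ω - S n ω = x} =
    if (∑ i, (x i).natAbs) = 1 then ((2 * d : ℝ≥0∞))⁻¹ else 0

open Real Finset

lemma integral_comp_eq_sum_of_ae_mem {X Y : Type*} [MeasurableSpace X] {ρ : Measure X}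
    [IsFiniteMeasure ρ] {φ : X → Y} (hφ : ∀ y, MeasurableSet (φ ⁻¹' {y})) {T : Finset Y}
    (hT : ∀ᵐ x ∂ρ, φ x ∈ T) (g : Y → ℝ) :
    ∫ x, g (φ x) ∂ρ = ∑ y ∈ T, ρ.real (φ ⁻¹' {y}) * g y := by
  have h_sum : (fun x => g (φ x)) =ᵐ[ρ]
      fun x => ∑ y ∈ T, (φ ⁻¹' {y}).indicator (fun _ => g y) x := by
    filter_upwards [hT] with x hx
    rw [Finset.sum_eq_single_of_mem (φ x) hx fun y _ hy => ?_]
    · simp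
    · simp [Set.indicator, Ne.symm hy]
  rw [integral_congr_ae h_sum,
    integral_finsetSum _ fun y _ => (integrable_const _).indicator (hφ y)]
  simp [integral_indicator_const _ (hφ _)]

lemma ProbabilityTheory.Indep.indepFun_of_measurable {Ω β γ : Type*} {m₁ m₂ m₀ : MeasurableSpace Ω}
    [MeasurableSpace β] [MeasurableSpace γ] {μ : Measure Ω} (hindep : Indep m₁ m₂ μ)
    {f : Ω → β} {g : Ω → γ} (hf : Measurable[m₁] f) (hg : Measurable[m₂] g) :
    IndepFun f g μ :=
  (IndepFun_iff_Indep f g μ).2 (indep_of_indep_of_le hindep hf.comap_le hg.comap_le)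

lemma condExp_mul_of_indep {Ω : Type*} {m m' m₀ : MeasurableSpace Ω} {μ : Measure Ω}
    [IsProbabilityMeasure μ] (hm : m ≤ m₀) (hm' : m' ≤ m₀) (hindep : Indep m' m μ) {f g : Ω → ℝ}
    (hf : StronglyMeasurable[m] f) (hg : StronglyMeasurable[m'] g)
    (hfi : Integrable f μ) (hgi : Integrable g μ) :
    μ[f * g | m] =ᵐ[μ] fun ω => f ω * μ[g] := by
  have hfg := hindep.symm.indepFun_of_measurable hf.measurable hg.measurable
  refine (condExp_mul_of_stronglyMeasurable_left hf (hfg.integrable_mul hfi hgi) hgi).trans ?_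
  exact EventuallyEq.rfl.mul (condExp_indep_eq hm' hm hg hindep)

section PathMeasure

variable {α : Type*}

lemma extend_val_comp_val_apply [Zero α] {n t : ℕ} (γ : ℕ → α) (ht : t < n) :
    Function.extend (Fin.val : Fin n → ℕ) (γ ∘ Fin.val) 0 t = γ t :=
  Fin.val_injective.extend_apply (γ ∘ Fin.val) 0 ⟨t, ht⟩

variable [MeasurableSpace α] [MeasurableSingletonClass α]

lemma measurableSet_comp_val_eq {n : ℕ} (v : Fin n → α) :
    MeasurableSet {γ : ℕ → α | γ ∘ Fin.val = v} :=
  (measurable_pi_lambda (fun γ : ℕ → α => γ ∘ Fin.val) fun _ => measurable_pi_apply _)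
    (measurableSet_singleton v)

variable [Zero α] {n : ℕ}

lemma integral_eq_sum_of_ae_comp_val_mem {P : Measure (ℕ → α)} [IsFiniteMeasure P]
    {T : Finset (Fin n → α)} (hT : ∀ᵐ γ ∂P, γ ∘ Fin.val ∈ T) {f : (ℕ → α) → ℝ}
    (hf : ∀ γ γ', (∀ t < n, γ t = γ' t) → f γ = f γ') :
    ∫ γ, f γ ∂P =
      ∑ v ∈ T, P.real {γ | γ ∘ Fin.val = v} * f (Function.extend Fin.val v 0) := by
  rw [integral_congr_ae (ae_of_all _ fun γ =>
    hf γ _ fun t ht => (extend_val_comp_val_apply γ ht).symm)]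
  exact integral_comp_eq_sum_of_ae_mem measurableSet_comp_val_eq hT
    fun v => f (Function.extend Fin.val v 0)

lemma integral_prod_eq_sum_of_ae_comp_val_mem {P Q : Measure (ℕ → α)} [IsFiniteMeasure P]
    [IsFiniteMeasure Q] {T T' : Finset (Fin n → α)} (hT : ∀ᵐ γ ∂P, γ ∘ Fin.val ∈ T)
    (hT' : ∀ᵐ γ ∂Q, γ ∘ Fin.val ∈ T') {F : (ℕ → α) × (ℕ → α) → ℝ}
    (hF : ∀ p p', (∀ t < n, p.1 t = p'.1 t ∧ p.2 t = p'.2 t) → F p = F p') :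
    ∫ p, F p ∂(P.prod Q) = ∑ v ∈ T, ∑ u ∈ T', P.real {γ | γ ∘ Fin.val = v} *
      Q.real {γ | γ ∘ Fin.val = u} *
        F (Function.extend Fin.val v 0, Function.extend Fin.val u 0) := by
  have hfiber : ∀ q : (Fin n → α) × (Fin n → α),
      (fun p : (ℕ → α) × (ℕ → α) => (p.1 ∘ Fin.val, p.2 ∘ Fin.val)) ⁻¹' {q} =
        {γ | γ ∘ Fin.val = q.1} ×ˢ {γ | γ ∘ Fin.val = q.2} := fun q => by
    ext p
    simp [Prod.ext_iff]
  rw [integral_congr_ae (ae_of_all _ fun p => hF p (Function.extend Fin.val (p.1 ∘ Fin.val) 0,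
      Function.extend Fin.val (p.2 ∘ Fin.val) 0) fun t ht =>
      ⟨(extend_val_comp_val_apply p.1 ht).symm, (extend_val_comp_val_apply p.2 ht).symm⟩)]
  refine (integral_comp_eq_sum_of_ae_mem (φ := fun p => (p.1 ∘ Fin.val, p.2 ∘ Fin.val))
    (fun q => hfiber q ▸ (measurableSet_comp_val_eq q.1).prod (measurableSet_comp_val_eq q.2))
    ((Measure.quasiMeasurePreserving_fst.ae hT).and (Measure.quasiMeasurePreserving_snd.ae hT')
      |>.mono fun p hp => mem_product.2 hp)
    fun q => F (Function.extend Fin.val q.1 0, Function.extend Fin.val q.2 0)).trans ?_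
  simp only [sum_product, hfiber, measureReal_prod_prod]

end PathMeasure

lemma IsSRWFrom.ae_abs_sub_le {d : ℕ} {Ω : Type} [MeasurableSpace Ω] {μ : Measure Ω}
    {S : ℕ → Ω → Fin d → ℤ} {x0 : Fin d → ℤ} (hS : IsSRWFrom d μ S x0) :
    ∀ᵐ ω ∂μ, ∀ n i, |S n ω i - x0 i| ≤ n := by
  obtain ⟨hmeas, h0, -, hstep⟩ := hS
  have hunit : ∀ n, ∀ᵐ ω ∂μ, ∑ i, ((S (n + 1) ω - S n ω) i).natAbs = 1 := fun n => by
    have hΔ : Measurable fun ω => S (n + 1) ω - S n ω := (hmeas (n + 1)).sub (hmeas n)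
    have hmap : ∀ᵐ x ∂(μ.map fun ω => S (n + 1) ω - S n ω), ∑ i, (x i).natAbs = 1 :=
      ae_iff_of_countable.2 fun x hx => by
        by_contra hx'
        rw [Measure.map_apply hΔ (measurableSet_singleton x)] at hx
        exact hx ((hstep n x).trans (if_neg hx'))
    exact ae_of_ae_map hΔ.aemeasurable hmap
  filter_upwards [h0, ae_all_iff.2 hunit] with ω hω0 hωunit n i
  induction n with
  | zero => simp [hω0]
  | succ n ih =>
    have hΔi : |(S (n + 1) ω - S n ω) i| ≤ 1 := by
      have h := single_le_sum (f := fun j => ((S (n + 1) ω - S n ω) j).natAbs)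
        (fun _ _ => Nat.zero_le _) (mem_univ i)
      rw [hωunit n] at h
      rw [Int.abs_eq_natAbs]
      exact_mod_cast h
    calc |S (n + 1) ω i - x0 i| = |(S n ω i - x0 i) + (S (n + 1) ω - S n ω) i| := by simp
      _ ≤ |S n ω i - x0 i| + |(S (n + 1) ω - S n ω) i| := abs_add_le _ _
      _ ≤ (n + 1 : ℕ) := by push_cast; linarith

lemma IsSRWFrom.ae_mem_Icc {d : ℕ} {Ω : Type} [MeasurableSpace Ω] {μ : Measure Ω}
    {S : ℕ → Ω → Fin d → ℤ} {x0 : Fin d → ℤ} (hS : IsSRWFrom d μ S x0) (k : ℕ) :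
    ∀ᵐ ω ∂μ, (fun j : Fin (k + 1) => S j ω) ∈
      Icc (fun _ i => x0 i - k) (fun _ i => x0 i + k) := by
  filter_upwards [hS.ae_abs_sub_le] with ω hω
  have h : ∀ (j : Fin (k + 1)) i, |S j ω i - x0 i| ≤ k := fun j i =>
    (hω j i).trans (by exact_mod_cast Nat.lt_succ_iff.1 j.2)
  simp only [mem_Icc, Pi.le_def]
  exact ⟨fun j i => by linarith [abs_le.1 (h j i)], fun j i => by linarith [abs_le.1 (h j i)]⟩

section Environment

variable {Ω X : Type*} [MeasurableSpace Ω] {μ : Measure Ω} {η : ℕ → X → Ω → ℝ} {lam : ℝ → ℝ}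

structure IsIndepEnvironment (μ : Measure Ω) (η : ℕ → X → Ω → ℝ) (lam : ℝ → ℝ) : Prop where
  measurable : ∀ t x, Measurable (η t x)
  indep : iIndepFun (fun p : ℕ × X => η p.1 p.2) μ
  integrable_exp_mul : ∀ t x b, Integrable (fun ω => exp (b * η t x ω)) μ
  integral_exp_mul : ∀ t x b, ∫ ω, exp (b * η t x ω) ∂μ = exp (lam b)

lemma IsIndepEnvironment.of_identDistrib [IsProbabilityMeasure μ] {ζ : Ω → ℝ}
    (hmeas : ∀ t x, Measurable (η t x)) (hindep : iIndepFun (fun p : ℕ × X => η p.1 p.2) μ)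
    (hid : ∀ t x, IdentDistrib (η t x) ζ μ μ)
    (hexp : ∀ b, Integrable (fun ω => exp (b * ζ ω)) μ)
    (hlam : ∀ b, lam b = log (∫ ω, exp (b * ζ ω) ∂μ)) :
    IsIndepEnvironment μ η lam where
  measurable := hmeas
  indep := hindep
  integrable_exp_mul t x b :=
    ((hid t x).comp (measurable_id.const_mul b).exp).integrable_iff.2 (hexp b)
  integral_exp_mul t x b := by
    rw [hlam, exp_log (integral_exp_pos (hexp b))]
    exact ((hid t x).comp (measurable_id.const_mul b).exp).integral_eq

lemma IsIndepEnvironment.integral_exp_mul_sub (hη : IsIndepEnvironment μ η lam) (b r : ℝ)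
    (t : ℕ) (x : X) : ∫ ω, exp (b * η t x ω - r) ∂μ = exp (lam b - r) := by
  simp_rw [exp_sub, integral_div, hη.integral_exp_mul]

end Environment

section Polymer

variable {Ω X : Type*} {η : ℕ → X → Ω → ℝ} {lam : ℝ → ℝ}

/-- The paper's `h_k(γ)`. -/
def logWeight (η : ℕ → X → Ω → ℝ) (lam : ℝ → ℝ) (β : ℝ) (k : ℕ) (γ : ℕ → X) (ω : Ω) : ℝ :=
  ∑ i ∈ range k, (β * η i (γ i) ω - lam β)

def weightFluctuation (η : ℕ → X → Ω → ℝ) (lam : ℝ → ℝ) (β : ℝ) (t : ℕ) (x : X) (ω : Ω) :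
    ℝ :=
  exp (β * η t x ω - lam β) - 1

abbrev envAt (η : ℕ → X → Ω → ℝ) (t : ℕ) : MeasurableSpace Ω :=
  ⨆ x, MeasurableSpace.comap (η t x) inferInstance

/-- The paper's `𝒢_k`. -/
abbrev envPast (η : ℕ → X → Ω → ℝ) (k : ℕ) : MeasurableSpace Ω :=
  ⨆ t ∈ range k, envAt η t

lemma logWeight_eq (β : ℝ) (n : ℕ) (γ : ℕ → X) (ω : Ω) :
    logWeight η lam β n γ ω = β * ∑ t ∈ range n, η t (γ t) ω - n * lam β := by
  simp [logWeight, Finset.sum_sub_distrib, Finset.mul_sum]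

lemma logWeight_congr {β : ℝ} {k : ℕ} {γ γ' : ℕ → X} (h : ∀ t < k, γ t = γ' t) :
    logWeight η lam β k γ = logWeight η lam β k γ' :=
  funext fun ω => sum_congr rfl fun t ht => by rw [h t (mem_range.1 ht)]

lemma exp_logWeight_succ_sub (β : ℝ) (k : ℕ) (γ : ℕ → X) (ω : Ω) :
    exp (logWeight η lam β (k + 1) γ ω) - exp (logWeight η lam β k γ ω) =
      exp (logWeight η lam β k γ ω) * weightFluctuation η lam β k (γ k) ω := by
  simp only [logWeight, sum_range_succ, exp_add, weightFluctuation]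
  ring

lemma measurable_envAt (t : ℕ) (x : X) : Measurable[envAt η t] (η t x) :=
  Measurable.of_comap_le (le_iSup (fun x => MeasurableSpace.comap (η t x) inferInstance) x)

lemma measurable_envPast {k t : ℕ} (ht : t < k) (x : X) : Measurable[envPast η k] (η t x) :=
  (measurable_envAt t x).mono (le_iSup₂ (f := fun t (_ : t ∈ range k) => envAt η t) t
    (mem_range.2 ht)) le_rfl

lemma measurable_logWeight (β : ℝ) (k : ℕ) (γ : ℕ → X) :
    Measurable[envPast η k] (logWeight η lam β k γ) :=
  Finset.measurable_fun_sum _ fun i hi =>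
    ((measurable_envPast (mem_range.1 hi) (γ i)).const_mul β).sub_const _

lemma measurable_weightFluctuation (β : ℝ) (t : ℕ) (x : X) :
    Measurable[envAt η t] (weightFluctuation η lam β t x) :=
  (((measurable_envAt t x).const_mul β).sub_const _).exp.sub_const 1

variable [MeasurableSpace Ω] {μ : Measure Ω}

lemma envAt_le (hmeas : ∀ t x, Measurable (η t x)) (t : ℕ) :
    envAt η t ≤ ‹MeasurableSpace Ω› :=
  iSup_le fun x => (hmeas t x).comap_le

lemma envPast_le (hmeas : ∀ t x, Measurable (η t x)) (k : ℕ) :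
    envPast η k ≤ ‹MeasurableSpace Ω› :=
  iSup₂_le fun t _ => envAt_le hmeas t

lemma IsIndepEnvironment.indep_envAt_envPast (hη : IsIndepEnvironment μ η lam) (k : ℕ) :
    Indep (envAt η k) (envPast η k) μ := by
  have h := indep_iSup_of_disjoint (fun p : ℕ × X => (hη.measurable p.1 p.2).comap_le)
    hη.indep.iIndep (S := {p | p.1 = k}) (T := {p | p.1 < k})
    (Set.disjoint_left.2 fun p hk hlt => hlt.ne hk)
  refine indep_of_indep_of_le h (iSup_le fun x => ?_) (iSup₂_le fun t ht => iSup_le fun x => ?_)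
  · exact le_iSup₂ (f := fun (p : ℕ × X) (_ : p ∈ {p : ℕ × X | p.1 = k}) =>
      MeasurableSpace.comap (η p.1 p.2) inferInstance) (k, x) rfl
  · exact le_iSup₂ (f := fun (p : ℕ × X) (_ : p ∈ {p : ℕ × X | p.1 < k}) =>
      MeasurableSpace.comap (η p.1 p.2) inferInstance) (t, x) (mem_range.1 ht)

lemma IsIndepEnvironment.memLp_exp_logWeight [IsFiniteMeasure μ]
    (hη : IsIndepEnvironment μ η lam) (β : ℝ) (k : ℕ) (γ : ℕ → X) :
    MemLp (fun ω => exp (logWeight η lam β k γ ω)) 2 μ := by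
  have hmeas : Measurable (logWeight η lam β k γ) :=
    (measurable_logWeight β k γ).mono (envPast_le hη.measurable k) le_rfl
  refine (memLp_two_iff_integrable_sq hmeas.exp.aestronglyMeasurable).2 ?_
  have hsum := (hη.indep.precomp (g := fun i => (i, γ i))
    fun i j hij => (Prod.ext_iff.1 hij).1).integrable_exp_mul_sum (t := 2 * β)
    (fun i => hη.measurable i (γ i)) (s := range k)
    fun i _ => hη.integrable_exp_mul i (γ i) (2 * β)
  refine (hsum.mul_const (exp (-(2 * k * lam β)))).congr (ae_of_all _ fun ω => ?_)
  simp only [Finset.sum_apply, ← exp_add, ← exp_nat_mul, logWeight_eq]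
  push_cast
  ring_nf

lemma IsIndepEnvironment.memLp_weightFluctuation [IsFiniteMeasure μ]
    (hη : IsIndepEnvironment μ η lam) (β : ℝ) (t : ℕ) (x : X) :
    MemLp (weightFluctuation η lam β t x) 2 μ := by
  have hmeas : Measurable fun ω => β * η t x ω - lam β :=
    ((hη.measurable t x).const_mul β).sub_const _
  refine MemLp.sub ?_ (memLp_const 1)
  refine (memLp_two_iff_integrable_sq hmeas.exp.aestronglyMeasurable).2 ?_
  refine ((hη.integrable_exp_mul t x (2 * β)).div_const (exp (2 * lam β))).congr
    (ae_of_all _ fun ω => ?_)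
  simp only [← exp_sub, ← exp_nat_mul]
  push_cast
  ring_nf

lemma IsIndepEnvironment.integral_weightFluctuation_mul [IsProbabilityMeasure μ] [DecidableEq X]
    (hη : IsIndepEnvironment μ η lam) (β : ℝ) (t : ℕ) (x y : X) :
    ∫ ω, weightFluctuation η lam β t x ω * weightFluctuation η lam β t y ω ∂μ =
      (exp (lam (2 * β) - 2 * lam β) - 1) * if x = y then 1 else 0 := by
  have hint : ∀ z b r, Integrable (fun ω => exp (b * η t z ω - r)) μ := fun z b r => by
    simpa only [exp_sub] using (hη.integrable_exp_mul t z b).div_const (exp r)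
  split_ifs with hxy
  · subst hxy
    have hsq : ∀ ω, weightFluctuation η lam β t x ω * weightFluctuation η lam β t x ω =
        exp (2 * β * η t x ω - 2 * lam β) - 2 * exp (β * η t x ω - lam β) + 1 := fun ω => by
      rw [weightFluctuation, show 2 * β * η t x ω - 2 * lam β =
        (β * η t x ω - lam β) + (β * η t x ω - lam β) by ring, exp_add]
      ring
    have h2 : Integrable (fun ω => 2 * exp (β * η t x ω - lam β)) μ := (hint x _ _).const_mul 2
    have h12 : Integrable (fun ω => exp (2 * β * η t x ω - 2 * lam β) -
        2 * exp (β * η t x ω - lam β)) μ := (hint x _ _).sub h2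
    simp_rw [hsq]
    rw [integral_add h12 (integrable_const 1), integral_sub (hint x _ _) h2, integral_const_mul,
      hη.integral_exp_mul_sub, hη.integral_exp_mul_sub]
    simp only [sub_self, exp_zero, integral_const, probReal_univ, smul_eq_mul]
    ring
  · have hindep : IndepFun (η t x) (η t y) μ :=
      hη.indep.indepFun (i := (t, x)) (j := (t, y)) (by simpa using hxy)
    have hφ : Measurable fun z : ℝ => exp (β * z - lam β) - 1 := by fun_prop
    refine ((hindep.comp hφ hφ).integral_mul_eq_mul_integral
      (hφ.comp (hη.measurable t x)).aestronglyMeasurable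
      (hφ.comp (hη.measurable t y)).aestronglyMeasurable).trans ?_
    simp [integral_sub (hint x _ _) (integrable_const 1), hη.integral_exp_mul_sub]

lemma IsIndepEnvironment.integrable_exp_logWeight_add [IsFiniteMeasure μ]
    (hη : IsIndepEnvironment μ η lam) (β : ℝ) (k : ℕ) (γ γ' : ℕ → X) :
    Integrable (fun ω => exp (logWeight η lam β k γ ω + logWeight η lam β k γ' ω)) μ := by
  simp only [exp_add]
  exact (hη.memLp_exp_logWeight β k γ).integrable_mul (hη.memLp_exp_logWeight β k γ')

lemma IsIndepEnvironment.integrable_weightFluctuation_mul [IsFiniteMeasure μ]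
    (hη : IsIndepEnvironment μ η lam) (β : ℝ) (t : ℕ) (x y : X) :
    Integrable (fun ω => weightFluctuation η lam β t x ω * weightFluctuation η lam β t y ω) μ :=
  (hη.memLp_weightFluctuation β t x).integrable_mul (hη.memLp_weightFluctuation β t y)

lemma IsIndepEnvironment.integrable_exp_logWeight_add_mul [IsProbabilityMeasure μ]
    (hη : IsIndepEnvironment μ η lam) (β : ℝ) (k : ℕ) (γ γ' : ℕ → X) :
    Integrable (fun ω => exp (logWeight η lam β k γ ω + logWeight η lam β k γ' ω) *
      (weightFluctuation η lam β k (γ k) ω * weightFluctuation η lam β k (γ' k) ω)) μ :=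
  ((hη.indep_envAt_envPast k).symm.indepFun_of_measurable
    ((measurable_logWeight β k γ).add (measurable_logWeight β k γ')).exp
    ((measurable_weightFluctuation β k _).mul (measurable_weightFluctuation β k _))).integrable_mul
    (hη.integrable_exp_logWeight_add β k γ γ') (hη.integrable_weightFluctuation_mul β k _ _)

lemma IsIndepEnvironment.condExp_exp_logWeight_add_mul [IsProbabilityMeasure μ] [DecidableEq X]
    (hη : IsIndepEnvironment μ η lam) (β : ℝ) (k : ℕ) (γ γ' : ℕ → X) :
    μ[fun ω => exp (logWeight η lam β k γ ω + logWeight η lam β k γ' ω) *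
        (weightFluctuation η lam β k (γ k) ω * weightFluctuation η lam β k (γ' k) ω) |
        envPast η k] =ᵐ[μ]
      fun ω => exp (logWeight η lam β k γ ω + logWeight η lam β k γ' ω) *
        ((exp (lam (2 * β) - 2 * lam β) - 1) * if γ k = γ' k then 1 else 0) := by
  rw [← hη.integral_weightFluctuation_mul]
  exact condExp_mul_of_indep (envPast_le hη.measurable k) (envAt_le hη.measurable k)
    (hη.indep_envAt_envPast k)
    ((measurable_logWeight β k γ).add (measurable_logWeight β k γ')).exp.stronglyMeasurable
    ((measurable_weightFluctuation β k _).mul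
      (measurable_weightFluctuation β k _)).stronglyMeasurable
    (hη.integrable_exp_logWeight_add β k γ γ') (hη.integrable_weightFluctuation_mul β k _ _)

lemma IsIndepEnvironment.condExp_sq_sum_mul_weightFluctuation [IsProbabilityMeasure μ]
    [DecidableEq X] (hη : IsIndepEnvironment μ η lam) (β : ℝ) (k : ℕ) {ι : Type*} (s : Finset ι)
    (c : ι → ℝ) (γ : ι → ℕ → X) :
    μ[fun ω => (∑ i ∈ s, c i * (exp (logWeight η lam β k (γ i) ω) *
        weightFluctuation η lam β k (γ i k) ω)) ^ 2 | envPast η k] =ᵐ[μ]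
      fun ω => (exp (lam (2 * β) - 2 * lam β) - 1) * ∑ i ∈ s, ∑ j ∈ s, c i * c j *
        (exp (logWeight η lam β k (γ i) ω + logWeight η lam β k (γ j) ω) *
          if γ i k = γ j k then 1 else 0) := by
  set Z : ι × ι → Ω → ℝ := fun p ω =>
    exp (logWeight η lam β k (γ p.1) ω + logWeight η lam β k (γ p.2) ω) *
      (weightFluctuation η lam β k (γ p.1 k) ω * weightFluctuation η lam β k (γ p.2 k) ω)
  have hsq : (fun ω => (∑ i ∈ s, c i * (exp (logWeight η lam β k (γ i) ω) *
      weightFluctuation η lam β k (γ i k) ω)) ^ 2) = ∑ p ∈ s ×ˢ s, (c p.1 * c p.2) • Z p := by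
    funext ω
    simp only [sq, sum_mul_sum, Finset.sum_apply, Pi.smul_apply, smul_eq_mul, sum_product, Z,
      exp_add]
    exact sum_congr rfl fun i _ => sum_congr rfl fun j _ => by ring
  have hZ : ∀ p ∈ s ×ˢ s, μ[(c p.1 * c p.2) • Z p | envPast η k] =ᵐ[μ] (c p.1 * c p.2) •
      fun ω => exp (logWeight η lam β k (γ p.1) ω + logWeight η lam β k (γ p.2) ω) *
        ((exp (lam (2 * β) - 2 * lam β) - 1) * if γ p.1 k = γ p.2 k then 1 else 0) :=
    fun p _ => (condExp_smul _ _ _).trans ((hη.condExp_exp_logWeight_add_mul β k _ _).const_smul _)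
  rw [hsq]
  refine (condExp_finsetSum (fun p _ => (hη.integrable_exp_logWeight_add_mul β k _ _).smul _)
    _).trans ?_
  filter_upwards [(eventually_all_finset _).2 hZ] with ω hω
  rw [Finset.sum_apply, sum_congr rfl hω, sum_product, mul_sum]
  refine sum_congr rfl fun i _ => ?_
  rw [mul_sum]
  refine sum_congr rfl fun j _ => ?_
  simp only [Pi.smul_apply, smul_eq_mul]
  ring

end Polymer

section PolymerPaths

variable {Ω X : Type*} [MeasurableSpace X] [MeasurableSingletonClass X] [Zero X]
  {η : ℕ → X → Ω → ℝ} {lam : ℝ → ℝ} {P : Measure (ℕ → X)} [IsFiniteMeasure P] {k : ℕ}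
  {T : Finset (Fin (k + 1) → X)}

lemma integral_exp_logWeight_succ_sub (hT : ∀ᵐ γ ∂P, γ ∘ Fin.val ∈ T) (β : ℝ) (ω : Ω) :
    ∫ γ, exp (logWeight η lam β (k + 1) γ ω) ∂P - ∫ γ, exp (logWeight η lam β k γ ω) ∂P =
      ∑ v ∈ T, P.real {γ | γ ∘ Fin.val = v} *
        (exp (logWeight η lam β k (Function.extend Fin.val v 0) ω) *
          weightFluctuation η lam β k (Function.extend Fin.val v 0 k) ω) := by
  have hsum : ∀ n ≤ k + 1, ∫ γ, exp (logWeight η lam β n γ ω) ∂P = ∑ v ∈ T,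
      P.real {γ | γ ∘ Fin.val = v} * exp (logWeight η lam β n (Function.extend Fin.val v 0) ω) :=
    fun n hn => integral_eq_sum_of_ae_comp_val_mem hT fun γ γ' h => by
      rw [logWeight_congr fun t ht => h t (ht.trans_le hn)]
  rw [hsum _ le_rfl, hsum _ k.le_succ, ← sum_sub_distrib]
  simp only [← mul_sub, exp_logWeight_succ_sub]

lemma integral_prod_exp_logWeight_add_mul_ite [DecidableEq X] (hT : ∀ᵐ γ ∂P, γ ∘ Fin.val ∈ T)
    (β : ℝ) (ω : Ω) :
    ∫ p, exp (logWeight η lam β k p.1 ω + logWeight η lam β k p.2 ω) *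
        (if p.1 k = p.2 k then (1 : ℝ) else 0) ∂(P.prod P) =
      ∑ v ∈ T, ∑ u ∈ T, P.real {γ | γ ∘ Fin.val = v} * P.real {γ | γ ∘ Fin.val = u} *
        (exp (logWeight η lam β k (Function.extend Fin.val v 0) ω +
          logWeight η lam β k (Function.extend Fin.val u 0) ω) *
        if Function.extend Fin.val v 0 k = Function.extend Fin.val u 0 k then 1 else 0) :=
  integral_prod_eq_sum_of_ae_comp_val_mem hT hT fun p p' h => by
    rw [logWeight_congr fun t ht => (h t (ht.trans k.lt_succ_self)).1,
      logWeight_congr fun t ht => (h t (ht.trans k.lt_succ_self)).2,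
      (h k k.lt_succ_self).1, (h k k.lt_succ_self).2]

end PolymerPaths

theorem conditional_variance_of_differences_general
    (d : ℕ)
    {Ω : Type} [MeasurableSpace Ω] (μ : Measure Ω) [IsProbabilityMeasure μ]
    (η : ℕ → (Fin d → ℤ) → Ω → ℝ)
    (hηmeas : ∀ t x, Measurable (η t x))
    (hηindep : iIndepFun
      (fun p : ℕ × (Fin d → ℤ) => η p.1 p.2) μ)
    (hηid : ∀ t x, Measure.map (η t x) μ = Measure.map (η 0 0) μ)
    (hηexp : ∀ b : ℝ, Integrable (fun ω => Real.exp (b * η 0 0 ω)) μ)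
    (lam : ℝ → ℝ) (hlam : ∀ b, lam b = Real.log (∫ ω, Real.exp (b * η 0 0 ω) ∂μ))
    (P : Measure (ℕ → Fin d → ℤ)) [IsProbabilityMeasure P]
    (hP : IsSRWFrom d P (fun n γ => γ n) 0)
    (β : ℝ) (W : ℕ → Ω → ℝ)
    (hW : ∀ n ω, W n ω =
      ∫ γ, Real.exp (β * (∑ t ∈ Finset.range n, η t (γ t) ω) - n * lam β) ∂P)
    (lam2 : ℝ) (hlam2 : lam2 = lam (2 * β) - 2 * lam β)
    (κ2 : ℝ) (hκ2 : κ2 = Real.exp lam2 - 1)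
    (k : ℕ) :
    μ[fun ω => (W (k + 1) ω - W k ω) ^ 2 |
        ⨆ t ∈ Finset.range k, ⨆ x : Fin d → ℤ,
          MeasurableSpace.comap (η t x) inferInstance]
      =ᵐ[μ] fun ω => κ2 * ∫ p,
        Real.exp ((∑ i ∈ Finset.range k, (β * η i (p.1 i) ω - lam β)) +
            (∑ i ∈ Finset.range k, (β * η i (p.2 i) ω - lam β))) *
          (if p.1 k = p.2 k then (1 : ℝ) else 0) ∂(P.prod P) := by
  have hη : IsIndepEnvironment μ η lam := .of_identDistrib hηmeas hηindep
    (fun t x => ⟨(hηmeas t x).aemeasurable, (hηmeas 0 0).aemeasurable, hηid t x⟩) hηexp hlam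
  obtain ⟨T, hT⟩ : ∃ T : Finset (Fin (k + 1) → Fin d → ℤ), ∀ᵐ γ ∂P, γ ∘ Fin.val ∈ T :=
    ⟨_, hP.ae_mem_Icc k⟩
  simp only [hW, ← logWeight_eq, integral_exp_logWeight_succ_sub hT]
  filter_upwards [hη.condExp_sq_sum_mul_weightFluctuation β k T
    (fun v => P.real {γ | γ ∘ Fin.val = v}) fun v => Function.extend Fin.val v 0] with ω hω
  rw [hω, ← integral_prod_exp_logWeight_add_mul_ite hT, hκ2, hlam2]
  -- the integrands agree after unfolding `logWeight`
  rfl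

/-- Conditional variance of the polymer martingale differences:
`E[D_{k+1}² | 𝒢_k] = κ₂ P^{⊗2}[e^{h_k(S)} e^{h_k(S̃)} 1{S_k = S̃_k}]`. -/
theorem conditional_variance_of_differences
    (d : ℕ) (hd : 3 ≤ d)
    {Ω : Type} [MeasurableSpace Ω] (μ : Measure Ω) [IsProbabilityMeasure μ]
    (η : ℕ → (Fin d → ℤ) → Ω → ℝ)
    (hηmeas : ∀ t x, Measurable (η t x))
    (hηindep : iIndepFun
      (fun p : ℕ × (Fin d → ℤ) => η p.1 p.2) μ)
    (hηid : ∀ t x, Measure.map (η t x) μ = Measure.map (η 0 0) μ)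
    (hηexp : ∀ b : ℝ, Integrable (fun ω => Real.exp (b * η 0 0 ω)) μ)
    (lam : ℝ → ℝ) (hlam : ∀ b, lam b = Real.log (∫ ω, Real.exp (b * η 0 0 ω) ∂μ))
    (P : Measure (ℕ → Fin d → ℤ)) [IsProbabilityMeasure P]
    (hP : IsSRWFrom d P (fun n γ => γ n) 0)
    (β : ℝ) (W : ℕ → Ω → ℝ)
    (hW : ∀ n ω, W n ω =
      ∫ γ, Real.exp (β * (∑ t ∈ Finset.range n, η t (γ t) ω) - n * lam β) ∂P)
    (lam2 : ℝ) (hlam2 : lam2 = lam (2 * β) - 2 * lam β)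
    (κ2 : ℝ) (hκ2 : κ2 = Real.exp lam2 - 1)
    (k : ℕ) :
    μ[fun ω => (W (k + 1) ω - W k ω) ^ 2 |
        ⨆ t ∈ Finset.range k, ⨆ x : Fin d → ℤ,
          MeasurableSpace.comap (η t x) inferInstance]
      =ᵐ[μ] fun ω => κ2 * ∫ p,
        Real.exp ((∑ i ∈ Finset.range k, (β * η i (p.1 i) ω - lam β)) +
            (∑ i ∈ Finset.range k, (β * η i (p.2 i) ω - lam β))) *
          (if p.1 k = p.2 k then (1 : ℝ) else 0) ∂(P.prod P) :=
  conditional_variance_of_differences_general d μ η hηmeas hηindep hηid hηexp lam hlam P hP β W hW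
    lam2 hlam2 κ2 hκ2 k
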